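/- arXiv:2211.15562 — 5 statements merged into one kernel-verified Lean document; each statement's English description precedes it below -/
import Mathlib

section
/- Suppose (ṽ₁, ṽ₂) ∈ ℝ^{m₁}×ℝ^{m₂} satisfies Φ_{τ₁,τ₂}(ṽ₁, ṽ₂) = φ (ṽ₁, ṽ₂). Then the vector u = (P₁W₁Φ₁^{−1/2}ṽ₁, P₂W₂Φ₂^{−1/2}ṽ₂) ∈ ℝ^{n₁+n₂} satisfies S₀ u = φ u. -/
open Matrix

lemma proj_idem {n : ℕ} (hn : 0 < n) :
    ((1 : Matrix (Fin n) (Fin n) ℝ) - (n : ℝ)⁻¹ • Matrix.of (fun _ _ => (1 : ℝ))) *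
      ((1 : Matrix (Fin n) (Fin n) ℝ) - (n : ℝ)⁻¹ • Matrix.of (fun _ _ => (1 : ℝ)))
    = (1 : Matrix (Fin n) (Fin n) ℝ) - (n : ℝ)⁻¹ • Matrix.of (fun _ _ => (1 : ℝ)) := by
  have hJ : (Matrix.of (fun _ _ => (1 : ℝ)) : Matrix (Fin n) (Fin n) ℝ) *
      Matrix.of (fun _ _ => (1 : ℝ)) = (n : ℝ) • Matrix.of (fun _ _ => (1 : ℝ)) := by
    ext i j
    simp [Matrix.mul_apply]
  have hn' : (n : ℝ) ≠ 0 := Nat.cast_ne_zero.mpr hn.ne'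
  simp only [sub_mul, mul_sub, one_mul, mul_one, Matrix.smul_mul, Matrix.mul_smul, hJ,
    smul_smul]
  rw [inv_mul_cancel₀ hn']
  simp

/-- If `(ṽ₁, ṽ₂)` is an eigenvector of the block matrix `Φ_{τ₁,τ₂}` with
eigenvalue `φ`, then `u = (P₁ W₁ Φ₁^{-1/2} ṽ₁, P₂ W₂ Φ₂^{-1/2} ṽ₂)` is an
eigenvector of `S₀` with the same eigenvalue `φ`. -/
theorem stmt3 {n₁ n₂ m₁ m₂ m : ℕ} (hn₁ : 0 < n₁) (hn₂ : 0 < n₂)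
    (W₁ : Matrix (Fin n₁) (Fin m₁) ℝ) (W₂ : Matrix (Fin n₂) (Fin m₂) ℝ)
    (R₁ : Matrix (Fin m) (Fin m₁) ℝ) (R₂ : Matrix (Fin m) (Fin m₂) ℝ)
    (τ₁ τ₂ : ℝ)
    (P₁ : Matrix (Fin n₁) (Fin n₁) ℝ) (P₂ : Matrix (Fin n₂) (Fin n₂) ℝ)
    (hP₁ : P₁ = 1 - (n₁ : ℝ)⁻¹ • Matrix.of (fun _ _ => (1 : ℝ)))
    (hP₂ : P₂ = 1 - (n₂ : ℝ)⁻¹ • Matrix.of (fun _ _ => (1 : ℝ)))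
    (M : Matrix (Fin n₁ ⊕ Fin n₂) (Fin n₁ ⊕ Fin n₂) ℝ)
    (hM : M = Matrix.fromBlocks
      (W₁ * W₁ᵀ + τ₁ ^ 2 • (1 : Matrix (Fin n₁) (Fin n₁) ℝ)) (W₁ * R₁ᵀ * R₂ * W₂ᵀ)
      (W₂ * R₂ᵀ * R₁ * W₁ᵀ) (W₂ * W₂ᵀ + τ₂ ^ 2 • (1 : Matrix (Fin n₂) (Fin n₂) ℝ)))
    (S₀ : Matrix (Fin n₁ ⊕ Fin n₂) (Fin n₁ ⊕ Fin n₂) ℝ)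
    (hS₀ : S₀ = Matrix.fromBlocks P₁ 0 0 P₂ * M * Matrix.fromBlocks P₁ 0 0 P₂)
    -- positive definite square roots of Φ₁ = W₁ᵀ P₁ W₁ and Φ₂ = W₂ᵀ P₂ W₂
    (Φ₁s : Matrix (Fin m₁) (Fin m₁) ℝ) (Φ₂s : Matrix (Fin m₂) (Fin m₂) ℝ)
    (hΦ₁spos : Φ₁s.PosDef) (hΦ₂spos : Φ₂s.PosDef)
    (hΦ₁s : Φ₁s * Φ₁s = W₁ᵀ * P₁ * W₁) (hΦ₂s : Φ₂s * Φ₂s = W₂ᵀ * P₂ * W₂)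
    (hΦ₁pd : (W₁ᵀ * P₁ * W₁).PosDef) (hΦ₂pd : (W₂ᵀ * P₂ * W₂).PosDef)
    (Φτ : Matrix (Fin m₁ ⊕ Fin m₂) (Fin m₁ ⊕ Fin m₂) ℝ)
    (hΦτ : Φτ = Matrix.fromBlocks
      (W₁ᵀ * P₁ * W₁ + τ₁ ^ 2 • (1 : Matrix (Fin m₁) (Fin m₁) ℝ)) (Φ₁s * R₁ᵀ * R₂ * Φ₂s)
      (Φ₂s * R₂ᵀ * R₁ * Φ₁s) (W₂ᵀ * P₂ * W₂ + τ₂ ^ 2 • (1 : Matrix (Fin m₂) (Fin m₂) ℝ)))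
    (v₁ : Fin m₁ → ℝ) (v₂ : Fin m₂ → ℝ) (φ : ℝ)
    (heig : Φτ.mulVec (Sum.elim v₁ v₂) = φ • Sum.elim v₁ v₂) :
    S₀.mulVec (Sum.elim ((P₁ * W₁ * Φ₁s⁻¹).mulVec v₁) ((P₂ * W₂ * Φ₂s⁻¹).mulVec v₂))
      = φ • Sum.elim ((P₁ * W₁ * Φ₁s⁻¹).mulVec v₁) ((P₂ * W₂ * Φ₂s⁻¹).mulVec v₂) := by
  -- idempotence of the centering projections
  have hP₁sq : P₁ * P₁ = P₁ := by rw [hP₁]; exact proj_idem hn₁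
  have hP₂sq : P₂ * P₂ = P₂ := by rw [hP₂]; exact proj_idem hn₂
  -- invertibility of the square roots
  have hu₁ : IsUnit Φ₁s.det := isUnit_iff_ne_zero.mpr (ne_of_gt hΦ₁spos.det_pos)
  have hu₂ : IsUnit Φ₂s.det := isUnit_iff_ne_zero.mpr (ne_of_gt hΦ₂spos.det_pos)
  have hinv₁ : Φ₁s⁻¹ * Φ₁s = 1 := Matrix.nonsing_inv_mul _ hu₁
  have hinv₁' : Φ₁s * Φ₁s⁻¹ = 1 := Matrix.mul_nonsing_inv _ hu₁
  have hinv₂ : Φ₂s⁻¹ * Φ₂s = 1 := Matrix.nonsing_inv_mul _ hu₂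
  have hinv₂' : Φ₂s * Φ₂s⁻¹ = 1 := Matrix.mul_nonsing_inv _ hu₂
  set A₁ := P₁ * W₁ * Φ₁s⁻¹ with hA₁
  set A₂ := P₂ * W₂ * Φ₂s⁻¹ with hA₂
  set U : Matrix (Fin n₁ ⊕ Fin n₂) (Fin m₁ ⊕ Fin m₂) ℝ := Matrix.fromBlocks A₁ 0 0 A₂
    with hU
  -- the key matrix identity
  have key : S₀ * U = U * Φτ := by
    have e11 : P₁ * ((W₁ * W₁ᵀ + τ₁ ^ 2 • 1) * (P₁ * A₁))
        = A₁ * (W₁ᵀ * P₁ * W₁ + τ₁ ^ 2 • 1) := by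
      have hPA : P₁ * A₁ = A₁ := by
        rw [hA₁, ← Matrix.mul_assoc, ← Matrix.mul_assoc, hP₁sq]
      rw [hPA]
      simp only [Matrix.add_mul, Matrix.mul_add, Matrix.smul_mul, Matrix.mul_smul,
        Matrix.one_mul, Matrix.mul_one, hPA]
      congr 1
      · rw [hA₁]
        calc P₁ * (W₁ * W₁ᵀ * (P₁ * W₁ * Φ₁s⁻¹))
            = P₁ * W₁ * (W₁ᵀ * P₁ * W₁ * Φ₁s⁻¹) := by
              simp only [Matrix.mul_assoc]
          _ = P₁ * W₁ * (Φ₁s * Φ₁s * Φ₁s⁻¹) := by rw [hΦ₁s]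
          _ = P₁ * W₁ * Φ₁s := by rw [Matrix.mul_assoc Φ₁s, hinv₁', Matrix.mul_one]
          _ = P₁ * W₁ * (Φ₁s⁻¹ * (Φ₁s * Φ₁s)) := by
              rw [← Matrix.mul_assoc Φ₁s⁻¹, hinv₁, Matrix.one_mul]
          _ = P₁ * W₁ * Φ₁s⁻¹ * (W₁ᵀ * P₁ * W₁) := by rw [hΦ₁s]; simp only [Matrix.mul_assoc]
    have e22 : P₂ * ((W₂ * W₂ᵀ + τ₂ ^ 2 • 1) * (P₂ * A₂))
        = A₂ * (W₂ᵀ * P₂ * W₂ + τ₂ ^ 2 • 1) := by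
      have hPA : P₂ * A₂ = A₂ := by
        rw [hA₂, ← Matrix.mul_assoc, ← Matrix.mul_assoc, hP₂sq]
      rw [hPA]
      simp only [Matrix.add_mul, Matrix.mul_add, Matrix.smul_mul, Matrix.mul_smul,
        Matrix.one_mul, Matrix.mul_one, hPA]
      congr 1
      · rw [hA₂]
        calc P₂ * (W₂ * W₂ᵀ * (P₂ * W₂ * Φ₂s⁻¹))
            = P₂ * W₂ * (W₂ᵀ * P₂ * W₂ * Φ₂s⁻¹) := by
              simp only [Matrix.mul_assoc]
          _ = P₂ * W₂ * (Φ₂s * Φ₂s * Φ₂s⁻¹) := by rw [hΦ₂s]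
          _ = P₂ * W₂ * Φ₂s := by rw [Matrix.mul_assoc Φ₂s, hinv₂', Matrix.mul_one]
          _ = P₂ * W₂ * (Φ₂s⁻¹ * (Φ₂s * Φ₂s)) := by
              rw [← Matrix.mul_assoc Φ₂s⁻¹, hinv₂, Matrix.one_mul]
          _ = P₂ * W₂ * Φ₂s⁻¹ * (W₂ᵀ * P₂ * W₂) := by rw [hΦ₂s]; simp only [Matrix.mul_assoc]
    have e12 : P₁ * (W₁ * R₁ᵀ * R₂ * W₂ᵀ * (P₂ * A₂)) = A₁ * (Φ₁s * R₁ᵀ * R₂ * Φ₂s) := by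
      have hPA : P₂ * A₂ = A₂ := by
        rw [hA₂, ← Matrix.mul_assoc, ← Matrix.mul_assoc, hP₂sq]
      rw [hPA, hA₁, hA₂]
      calc P₁ * (W₁ * R₁ᵀ * R₂ * W₂ᵀ * (P₂ * W₂ * Φ₂s⁻¹))
          = P₁ * W₁ * R₁ᵀ * R₂ * (W₂ᵀ * P₂ * W₂ * Φ₂s⁻¹) := by simp only [Matrix.mul_assoc]
        _ = P₁ * W₁ * R₁ᵀ * R₂ * (Φ₂s * Φ₂s * Φ₂s⁻¹) := by rw [hΦ₂s]
        _ = P₁ * W₁ * R₁ᵀ * R₂ * Φ₂s := by rw [Matrix.mul_assoc Φ₂s, hinv₂', Matrix.mul_one]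
        _ = P₁ * W₁ * (Φ₁s⁻¹ * Φ₁s) * R₁ᵀ * R₂ * Φ₂s := by rw [hinv₁, Matrix.mul_one]
        _ = P₁ * W₁ * Φ₁s⁻¹ * (Φ₁s * R₁ᵀ * R₂ * Φ₂s) := by simp only [Matrix.mul_assoc]
    have e21 : P₂ * (W₂ * R₂ᵀ * R₁ * W₁ᵀ * (P₁ * A₁)) = A₂ * (Φ₂s * R₂ᵀ * R₁ * Φ₁s) := by
      have hPA : P₁ * A₁ = A₁ := by
        rw [hA₁, ← Matrix.mul_assoc, ← Matrix.mul_assoc, hP₁sq]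
      rw [hPA, hA₁, hA₂]
      calc P₂ * (W₂ * R₂ᵀ * R₁ * W₁ᵀ * (P₁ * W₁ * Φ₁s⁻¹))
          = P₂ * W₂ * R₂ᵀ * R₁ * (W₁ᵀ * P₁ * W₁ * Φ₁s⁻¹) := by simp only [Matrix.mul_assoc]
        _ = P₂ * W₂ * R₂ᵀ * R₁ * (Φ₁s * Φ₁s * Φ₁s⁻¹) := by rw [hΦ₁s]
        _ = P₂ * W₂ * R₂ᵀ * R₁ * Φ₁s := by rw [Matrix.mul_assoc Φ₁s, hinv₁', Matrix.mul_one]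
        _ = P₂ * W₂ * (Φ₂s⁻¹ * Φ₂s) * R₂ᵀ * R₁ * Φ₁s := by rw [hinv₂, Matrix.mul_one]
        _ = P₂ * W₂ * Φ₂s⁻¹ * (Φ₂s * R₂ᵀ * R₁ * Φ₁s) := by simp only [Matrix.mul_assoc]
    rw [hS₀, hM, hΦτ, hU]
    rw [Matrix.mul_assoc, Matrix.mul_assoc]
    simp only [Matrix.fromBlocks_multiply, Matrix.mul_zero, Matrix.zero_mul,
      zero_add, add_zero, Matrix.mul_one, Matrix.zero_mul,
      zero_mul, mul_zero, add_zero, zero_add]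
    rw [e11, e12, e21, e22]
  -- deduce the eigenvector statement
  have hw : U.mulVec (Sum.elim v₁ v₂)
      = Sum.elim (A₁.mulVec v₁) (A₂.mulVec v₂) := by
    rw [hU]
    ext (i | i) <;>
      simp [Matrix.fromBlocks_mulVec, Matrix.zero_mulVec]
  rw [← hw, Matrix.mulVec_mulVec, key, ← Matrix.mulVec_mulVec, heig,
    Matrix.mulVec_smul]
end

section
/- If τ₁² > τ₂², then the unit eigenvector (v₁₁, v₁₂) of M for the larger eigenvalue φ₁ satisfies v₁₁² = (φ₁ − τ₂²)(τ₁² − φ₂) / ((τ₁² − τ₂²)(φ₁ − φ₂)). -/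
open Matrix

/-- If `τ₁² > τ₂²`, the unit eigenvector `(v₁₁, v₁₂)` of
`M = [[Φ₁+τ₁², √(Φ₁Φ₂)], [√(Φ₁Φ₂), Φ₂+τ₂²]]` for the larger eigenvalue `φ₁`
satisfies `v₁₁² = (φ₁ − τ₂²)(τ₁² − φ₂) / ((τ₁² − τ₂²)(φ₁ − φ₂))`. -/
theorem stmt9 (Φ₁ Φ₂ τ₁sq τ₂sq φ₁ φ₂ v₁₁ v₁₂ : ℝ)
    (hΦ₁ : 0 < Φ₁) (hΦ₂ : 0 < Φ₂) (hτ : τ₂sq < τ₁sq) (hφ : φ₂ < φ₁)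
    (heig₁ : (!![Φ₁ + τ₁sq, Real.sqrt (Φ₁ * Φ₂);
        Real.sqrt (Φ₁ * Φ₂), Φ₂ + τ₂sq]).mulVec ![v₁₁, v₁₂] = φ₁ • ![v₁₁, v₁₂])
    (hunit : v₁₁ ^ 2 + v₁₂ ^ 2 = 1)
    (heig₂ : ∃ w : Fin 2 → ℝ, w ≠ 0 ∧ (!![Φ₁ + τ₁sq, Real.sqrt (Φ₁ * Φ₂);
        Real.sqrt (Φ₁ * Φ₂), Φ₂ + τ₂sq]).mulVec w = φ₂ • w) :
    v₁₁ ^ 2 = (φ₁ - τ₂sq) * (τ₁sq - φ₂) / ((τ₁sq - τ₂sq) * (φ₁ - φ₂)) := by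
  set s := Real.sqrt (Φ₁ * Φ₂) with hs
  have hs2 : s ^ 2 = Φ₁ * Φ₂ := Real.sq_sqrt (by positivity)
  have hspos : 0 < s := Real.sqrt_pos.mpr (by positivity)
  have e1 := congrFun heig₁ 0
  have e2 := congrFun heig₁ 1
  simp [mulVec, dotProduct, Fin.sum_univ_two] at e1 e2
  obtain ⟨w, hw, hweq⟩ := heig₂
  have f1 := congrFun hweq 0
  have f2 := congrFun hweq 1
  simp [mulVec, dotProduct, Fin.sum_univ_two] at f1 f2
  -- characteristic equation at φ₂
  have char₂ : (Φ₁ + τ₁sq - φ₂) * (Φ₂ + τ₂sq - φ₂) = Φ₁ * Φ₂ := by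
    rcases eq_or_ne (w 0) 0 with h0 | h0
    · have h1 : w 1 = 0 := by
        have hsw : s * w 1 = 0 := by linear_combination f1 - (Φ₁ + τ₁sq - φ₂) * h0
        exact (mul_eq_zero.mp hsw).resolve_left hspos.ne'
      exact absurd (funext fun i => by fin_cases i <;> simp [h0, h1]) hw
    · rcases eq_or_ne (w 1) 0 with h1 | h1
      · have hsw : s * w 0 = 0 := by linear_combination f2 - (Φ₂ + τ₂sq - φ₂) * h1
        exact absurd ((mul_eq_zero.mp hsw).resolve_left hspos.ne') h0
      · have key : (Φ₁ + τ₁sq - φ₂) * (Φ₂ + τ₂sq - φ₂) * (w 0 * w 1)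
            = s ^ 2 * (w 0 * w 1) := by
          linear_combination ((Φ₂ + τ₂sq - φ₂) * w 1) * f1 - (s * w 1) * f2
        have h := mul_right_cancel₀ (mul_ne_zero h0 h1) key
        rw [hs2] at h; exact h
  -- characteristic equation at φ₁
  have char₁ : (Φ₁ + τ₁sq - φ₁) * (Φ₂ + τ₂sq - φ₁) = Φ₁ * Φ₂ := by
    rcases eq_or_ne v₁₁ 0 with h0 | h0
    · have h1 : v₁₂ = 0 := by
        have hsv : s * v₁₂ = 0 := by linear_combination e1 - (Φ₁ + τ₁sq - φ₁) * h0
        exact (mul_eq_zero.mp hsv).resolve_left hspos.ne'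
      rw [h0, h1] at hunit; norm_num at hunit
    · rcases eq_or_ne v₁₂ 0 with h1 | h1
      · have hsv : s * v₁₁ = 0 := by linear_combination e2 - (Φ₂ + τ₂sq - φ₁) * h1
        exact absurd ((mul_eq_zero.mp hsv).resolve_left hspos.ne') h0
      · have key : (Φ₁ + τ₁sq - φ₁) * (Φ₂ + τ₂sq - φ₁) * (v₁₁ * v₁₂)
            = s ^ 2 * (v₁₁ * v₁₂) := by
          linear_combination ((Φ₂ + τ₂sq - φ₁) * v₁₂) * e1 - (s * v₁₂) * e2
        have h := mul_right_cancel₀ (mul_ne_zero h0 h1) key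
        rw [hs2] at h; exact h
  -- trace relation
  have htr : φ₁ + φ₂ = Φ₁ + τ₁sq + Φ₂ + τ₂sq := by
    have hne : φ₁ - φ₂ ≠ 0 := sub_ne_zero.mpr hφ.ne'
    have hz : (φ₁ - φ₂) * (φ₁ + φ₂ - (Φ₁ + τ₁sq + Φ₂ + τ₂sq)) = 0 := by
      linear_combination char₁ - char₂
    have := (mul_eq_zero.mp hz).resolve_left hne
    linarith
  set A := φ₁ - Φ₂ - τ₂sq with hA
  set B := φ₁ - Φ₁ - τ₁sq with hB
  have hAB : A * B = Φ₁ * Φ₂ := by rw [hA, hB]; linear_combination char₁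
  have hAne : A ≠ 0 := by
    intro h
    rw [h, zero_mul] at hAB
    nlinarith
  have hABsum : A + B = φ₁ - φ₂ := by rw [hA, hB]; linarith
  have hsum_ne : A + B ≠ 0 := hABsum ▸ sub_ne_zero.mpr hφ.ne'
  have key : s * v₁₁ = A * v₁₂ := by rw [hA]; linear_combination e2
  have H1 : s ^ 2 * v₁₁ ^ 2 = A ^ 2 * v₁₂ ^ 2 := by
    linear_combination (s * v₁₁ + A * v₁₂) * key
  have hv11 : v₁₁ ^ 2 * (A * (A + B)) = A ^ 2 := by
    linear_combination v₁₁ ^ 2 * hAB - v₁₁ ^ 2 * hs2 + H1 + A ^ 2 * hunit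
  have hv11' : v₁₁ ^ 2 = A / (A + B) := by
    rw [eq_div_iff hsum_ne]
    have hA2 : A * (v₁₁ ^ 2 * (A + B)) = A * A := by linear_combination hv11
    have := mul_left_cancel₀ hAne hA2
    linear_combination this
  rw [hv11']
  have hnum : (φ₁ - τ₂sq) * (τ₁sq - φ₂) = A * (τ₁sq - τ₂sq) := by
    rw [hA]; linear_combination (-(φ₁ - τ₂sq)) * htr + char₁
  have hden : (τ₁sq - τ₂sq) * (φ₁ - φ₂) = (τ₁sq - τ₂sq) * (A + B) := by rw [hABsum]
  rw [hnum, hden, mul_comm A (τ₁sq - τ₂sq), mul_div_mul_left _ _ (sub_ne_zero.mpr hτ.ne')]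
end

section
/- If A, B > 0 satisfy A/(φ₁ − τ²) + B/(φ₂ − τ²) = 1, then (1 − A/φ₁ − B/φ₂)² < τ⁴ · (A/φ₁ + B/φ₂) · ( A/((φ₁ − τ²)²·φ₁) + B/((φ₂ − τ²)²·φ₂) ). -/
lemma stmt11_aux (u v s₁ s₂ t : ℝ) (hu : 0 < u) (hv : 0 < v) (ht : 0 < t)
    (hs : s₁ ≠ s₂) :
    (t * (u * s₁ + v * s₂)) ^ 2 < t ^ 2 * (u + v) * (u * s₁ ^ 2 + v * s₂ ^ 2) := by
  have h : 0 < t ^ 2 * (u * v * (s₁ - s₂) ^ 2) := by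
    have : (s₁ - s₂) ≠ 0 := sub_ne_zero.mpr hs
    positivity
  nlinarith [h]

/-- Strict Cauchy–Schwarz inequality showing that the second maximal data
piling direction attains strictly larger separation than the ridge-based
directions: if `A, B > 0` and `A/(φ₁−τ²) + B/(φ₂−τ²) = 1`, then
`(1 − A/φ₁ − B/φ₂)² < τ⁴ (A/φ₁ + B/φ₂)(A/((φ₁−τ²)²φ₁) + B/((φ₂−τ²)²φ₂))`. -/
theorem stmt11 (φ₁ φ₂ τsq A B : ℝ)
    (hφ : φ₂ < φ₁) (hφ₂ : 0 < φ₂) (hτ : 0 < τsq)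
    (h₁ : τsq ≠ φ₁) (h₂ : τsq ≠ φ₂)
    (hA : 0 < A) (hB : 0 < B)
    (heq : A / (φ₁ - τsq) + B / (φ₂ - τsq) = 1) :
    (1 - A / φ₁ - B / φ₂) ^ 2 <
      τsq ^ 2 * (A / φ₁ + B / φ₂) *
        (A / ((φ₁ - τsq) ^ 2 * φ₁) + B / ((φ₂ - τsq) ^ 2 * φ₂)) := by
  have hφ₁ : 0 < φ₁ := hφ₂.trans hφ
  have hd₁ : φ₁ - τsq ≠ 0 := sub_ne_zero.mpr (Ne.symm h₁)
  have hd₂ : φ₂ - τsq ≠ 0 := sub_ne_zero.mpr (Ne.symm h₂)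
  have e0 : 1 - A / φ₁ - B / φ₂ =
      τsq * (A / φ₁ * (1 / (φ₁ - τsq)) + B / φ₂ * (1 / (φ₂ - τsq))) := by
    nth_rewrite 1 [← heq]; field_simp; ring
  have e1 : A / ((φ₁ - τsq) ^ 2 * φ₁) = A / φ₁ * (1 / (φ₁ - τsq)) ^ 2 := by
    field_simp
    try ring
    try tauto
  have e2 : B / ((φ₂ - τsq) ^ 2 * φ₂) = B / φ₂ * (1 / (φ₂ - τsq)) ^ 2 := by
    field_simp
    try ring
    try tauto
  rw [e0, e1, e2]
  refine stmt11_aux _ _ _ _ _ (div_pos hA hφ₁) (div_pos hB hφ₂) hτ ?_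
  intro h
  rw [div_eq_div_iff hd₁ hd₂] at h
  nlinarith
end

section
/- For i ≠ j, Cov(y_i², y_j²) = π₁(1 − π₁)(τ₁² − τ₂²)². In particular, this covariance is zero if and only if τ₁² = τ₂² (when 0 < π₁ < 1). -/
open MeasureTheory ProbabilityTheory

/-!
On `{U = 1}` only the first class is seen and on `{U = 0}` only the second, so
`y₁² y₂² = τ₁⁴ a₁² a₂² U + τ₂⁴ b₁² b₂² (1 - U)` and `yᵢ² = τ₁² aᵢ² U + τ₂² bᵢ² (1 - U)`.
Independence of `U` from the class variables, and of `a₁` from `a₂` and `b₁` from `b₂`,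
gives `E[y₁² y₂²] = τ₁⁴ π₁ + τ₂⁴ (1 - π₁)` and `E[yᵢ²] = τ₁² π₁ + τ₂² (1 - π₁)`: the
covariance is the variance of the two-point law taking the value `τ₁²` with probability `π₁`
and `τ₂²` otherwise, namely `π₁ (1 - π₁) (τ₁² - τ₂²)²`.
-/

lemma mixture_mul_mixture {u : ℝ} (hu : u = 0 ∨ u = 1) (p q p' q' : ℝ) :
    (p * u + q * (1 - u)) * (p' * u + q' * (1 - u)) = p * p' * u + q * q' * (1 - u) := by
  rcases hu with rfl | rfl <;> ring

section Mixture

variable {Ω : Type*} [MeasurableSpace Ω] {μ : Measure Ω}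

lemma ProbabilityTheory.IndepFun.integrable_mul_sq {X Y : Ω → ℝ} (h : IndepFun X Y μ)
    (hX : Integrable (fun ω => X ω ^ 2) μ) (hY : Integrable (fun ω => Y ω ^ 2) μ) :
    Integrable (fun ω => (X ω * Y ω) ^ 2) μ := by
  simp only [mul_pow]
  exact (h.comp (φ := (· ^ 2)) (ψ := (· ^ 2)) (by fun_prop) (by fun_prop)).integrable_mul hX hY

lemma ProbabilityTheory.IndepFun.integral_mul_sq {X Y : Ω → ℝ} (h : IndepFun X Y μ)
    (hX : AEStronglyMeasurable (fun ω => X ω ^ 2) μ)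
    (hY : AEStronglyMeasurable (fun ω => Y ω ^ 2) μ) :
    ∫ ω, (X ω * Y ω) ^ 2 ∂μ = (∫ ω, X ω ^ 2 ∂μ) * ∫ ω, Y ω ^ 2 ∂μ := by
  have hsq : IndepFun (fun ω => X ω ^ 2) (fun ω => Y ω ^ 2) μ :=
    h.comp (φ := (· ^ 2)) (ψ := (· ^ 2)) (by fun_prop) (by fun_prop)
  simp only [mul_pow]
  exact hsq.integral_fun_mul_eq_mul_integral hX hY

variable [IsProbabilityMeasure μ]

lemma integrable_of_forall_eq_zero_or_eq_one {U : Ω → ℝ} (hU : AEStronglyMeasurable U μ)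
    (hU01 : ∀ ω, U ω = 0 ∨ U ω = 1) : Integrable U μ :=
  .of_bound hU 1 (.of_forall fun ω => by rcases hU01 ω with h | h <;> simp [h])

lemma integral_mul_add_mul_one_sub {A B U : Ω → ℝ} (hA : Integrable A μ) (hB : Integrable B μ)
    (hU : Integrable U μ) (hAU : IndepFun A U μ) (hBU : IndepFun B U μ) :
    ∫ ω, A ω * U ω + B ω * (1 - U ω) ∂μ =
      (∫ ω, A ω ∂μ) * (∫ ω, U ω ∂μ) + (∫ ω, B ω ∂μ) * (1 - ∫ ω, U ω ∂μ) := by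
  have hU' : Integrable (fun ω => 1 - U ω) μ := (integrable_const 1).sub hU
  have hBU' : IndepFun B (fun ω => 1 - U ω) μ :=
    hBU.comp measurable_id (measurable_const.sub measurable_id)
  rw [integral_add (f := fun ω => A ω * U ω) (g := fun ω => B ω * (1 - U ω))
      (hAU.integrable_mul hA hU) (hBU'.integrable_mul hB hU'),
    hAU.integral_fun_mul_eq_mul_integral hA.aestronglyMeasurable hU.aestronglyMeasurable,
    hBU'.integral_fun_mul_eq_mul_integral hB.aestronglyMeasurable hU'.aestronglyMeasurable,
    integral_sub (integrable_const 1) hU, integral_const, probReal_univ, one_smul]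

lemma integral_sq_mixture {a b U : Ω → ℝ} (τ σ : ℝ) (hU01 : ∀ ω, U ω = 0 ∨ U ω = 1)
    (hU : Integrable U μ) (ha : Integrable (fun ω => a ω ^ 2) μ)
    (hb : Integrable (fun ω => b ω ^ 2) μ) (haU : IndepFun a U μ) (hbU : IndepFun b U μ) :
    ∫ ω, (τ * a ω * U ω + σ * b ω * (1 - U ω)) ^ 2 ∂μ =
      τ ^ 2 * (∫ ω, a ω ^ 2 ∂μ) * (∫ ω, U ω ∂μ) +
        σ ^ 2 * (∫ ω, b ω ^ 2 ∂μ) * (1 - ∫ ω, U ω ∂μ) := by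
  have hsq : ∀ ω, (τ * a ω * U ω + σ * b ω * (1 - U ω)) ^ 2 =
      τ ^ 2 * a ω ^ 2 * U ω + σ ^ 2 * b ω ^ 2 * (1 - U ω) := fun ω => by
    rw [sq, mixture_mul_mixture (hU01 ω)]; ring
  simp_rw [hsq]
  rw [integral_mul_add_mul_one_sub (ha.const_mul _) (hb.const_mul _) hU
      (haU.comp (φ := fun x => τ ^ 2 * x ^ 2) (by fun_prop) measurable_id)
      (hbU.comp (φ := fun x => σ ^ 2 * x ^ 2) (by fun_prop) measurable_id),
    integral_const_mul, integral_const_mul]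

lemma integral_sq_mul_sq_mixture {a₁ a₂ b₁ b₂ U : Ω → ℝ} (τ σ : ℝ)
    (hU01 : ∀ ω, U ω = 0 ∨ U ω = 1) (hU : Integrable U μ)
    (ha₁ : Integrable (fun ω => a₁ ω ^ 2) μ) (ha₂ : Integrable (fun ω => a₂ ω ^ 2) μ)
    (hb₁ : Integrable (fun ω => b₁ ω ^ 2) μ) (hb₂ : Integrable (fun ω => b₂ ω ^ 2) μ)
    (ha : IndepFun a₁ a₂ μ) (hb : IndepFun b₁ b₂ μ)
    (haU : IndepFun (fun ω => a₁ ω * a₂ ω) U μ) (hbU : IndepFun (fun ω => b₁ ω * b₂ ω) U μ) :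
    ∫ ω, (τ * a₁ ω * U ω + σ * b₁ ω * (1 - U ω)) ^ 2 *
        (τ * a₂ ω * U ω + σ * b₂ ω * (1 - U ω)) ^ 2 ∂μ =
      τ ^ 4 * (∫ ω, a₁ ω ^ 2 ∂μ) * (∫ ω, a₂ ω ^ 2 ∂μ) * (∫ ω, U ω ∂μ) +
        σ ^ 4 * (∫ ω, b₁ ω ^ 2 ∂μ) * (∫ ω, b₂ ω ^ 2 ∂μ) * (1 - ∫ ω, U ω ∂μ) := by
  have hprod : ∀ ω, (τ * a₁ ω * U ω + σ * b₁ ω * (1 - U ω)) ^ 2 *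
      (τ * a₂ ω * U ω + σ * b₂ ω * (1 - U ω)) ^ 2 =
      (τ ^ 2 * (a₁ ω * a₂ ω) * U ω + σ ^ 2 * (b₁ ω * b₂ ω) * (1 - U ω)) ^ 2 := fun ω => by
    rw [← mul_pow, mixture_mul_mixture (hU01 ω)]; ring
  simp_rw [hprod]
  rw [integral_sq_mixture _ _ hU01 hU (ha.integrable_mul_sq ha₁ ha₂)
      (hb.integrable_mul_sq hb₁ hb₂) haU hbU,
    ha.integral_mul_sq ha₁.aestronglyMeasurable ha₂.aestronglyMeasurable,
    hb.integral_mul_sq hb₁.aestronglyMeasurable hb₂.aestronglyMeasurable]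
  ring

end Mixture

theorem stmt15_general {Ωs : Type*} [MeasurableSpace Ωs] (μ : Measure Ωs)
    [IsProbabilityMeasure μ]
    (a₁ a₂ b₁ b₂ U : Ωs → ℝ) (π₁ τ₁ τ₂ : ℝ)
    (hπ₀ : 0 < π₁) (hπ₁ : π₁ < 1) (hmU : Measurable U)
    (hindep : iIndepFun ![a₁, a₂, b₁, b₂, U] μ)
    (hU01 : ∀ ω, U ω = 0 ∨ U ω = 1)
    (hUmean : ∫ ω, U ω ∂μ = π₁)
    (hInt : ∀ f ∈ [a₁, a₂, b₁, b₂], Integrable f μ ∧ Integrable (fun ω => f ω ^ 2) μ)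
    (hvar : ∀ f ∈ [a₁, a₂, b₁, b₂], ∫ ω, f ω ^ 2 ∂μ = 1) :
    let y₁ : Ωs → ℝ := fun ω => τ₁ * a₁ ω * U ω + τ₂ * b₁ ω * (1 - U ω)
    let y₂ : Ωs → ℝ := fun ω => τ₁ * a₂ ω * U ω + τ₂ * b₂ ω * (1 - U ω)
    (∫ ω, y₁ ω ^ 2 * y₂ ω ^ 2 ∂μ) - (∫ ω, y₁ ω ^ 2 ∂μ) * (∫ ω, y₂ ω ^ 2 ∂μ)
        = π₁ * (1 - π₁) * (τ₁ ^ 2 - τ₂ ^ 2) ^ 2 ∧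
      ((∫ ω, y₁ ω ^ 2 * y₂ ω ^ 2 ∂μ) - (∫ ω, y₁ ω ^ 2 ∂μ) * (∫ ω, y₂ ω ^ 2 ∂μ) = 0 ↔
        τ₁ ^ 2 = τ₂ ^ 2) := by
  intro y₁ y₂
  simp only [List.forall_mem_cons, List.not_mem_nil, IsEmpty.forall_iff, forall_const,
    and_true] at hInt hvar
  obtain ⟨⟨ha₁, ha₁sq⟩, ⟨ha₂, ha₂sq⟩, ⟨hb₁, hb₁sq⟩, ⟨hb₂, hb₂sq⟩⟩ := hInt
  obtain ⟨hva₁, hva₂, hvb₁, hvb₂⟩ := hvar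
  have hU : Integrable U μ := integrable_of_forall_eq_zero_or_eq_one hmU.aestronglyMeasurable hU01
  have hmeas : ∀ i, AEMeasurable (![a₁, a₂, b₁, b₂, U] i) μ := by
    intro i
    fin_cases i
    exacts [ha₁.aemeasurable, ha₂.aemeasurable, hb₁.aemeasurable, hb₂.aemeasurable,
      hmU.aemeasurable]
  have hcov : (∫ ω, y₁ ω ^ 2 * y₂ ω ^ 2 ∂μ) - (∫ ω, y₁ ω ^ 2 ∂μ) * (∫ ω, y₂ ω ^ 2 ∂μ) =
      π₁ * (1 - π₁) * (τ₁ ^ 2 - τ₂ ^ 2) ^ 2 := by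
    rw [integral_sq_mul_sq_mixture τ₁ τ₂ hU01 hU ha₁sq ha₂sq hb₁sq hb₂sq
        (hindep.indepFun (by decide : (0 : Fin 5) ≠ 1))
        (hindep.indepFun (by decide : (2 : Fin 5) ≠ 3))
        (hindep.indepFun_mul_left₀ hmeas 0 1 4 (by decide) (by decide))
        (hindep.indepFun_mul_left₀ hmeas 2 3 4 (by decide) (by decide)),
      integral_sq_mixture τ₁ τ₂ hU01 hU ha₁sq hb₁sq
        (hindep.indepFun (by decide : (0 : Fin 5) ≠ 4))
        (hindep.indepFun (by decide : (2 : Fin 5) ≠ 4)),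
      integral_sq_mixture τ₁ τ₂ hU01 hU ha₂sq hb₂sq
        (hindep.indepFun (by decide : (1 : Fin 5) ≠ 4))
        (hindep.indepFun (by decide : (3 : Fin 5) ≠ 4)),
      hva₁, hva₂, hvb₁, hvb₂, hUmean]
    ring
  refine ⟨hcov, ?_⟩
  rw [hcov]
  simp [hπ₀.ne', (sub_pos.2 hπ₁).ne', sub_eq_zero]

/-- For the two-class mixture `yᵢ = τ₁ aᵢ U + τ₂ bᵢ (1 − U)` with `U` Bernoulli
with mean `π₁` and `a₁, a₂, b₁, b₂, U` mutually independent, each `aᵢ, bᵢ`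
having mean 0 and variance 1:
`Cov(y₁², y₂²) = π₁(1 − π₁)(τ₁² − τ₂²)²`, which vanishes iff `τ₁² = τ₂²`. -/
theorem stmt15 {Ωs : Type*} [MeasurableSpace Ωs] (μ : Measure Ωs)
    [IsProbabilityMeasure μ]
    (a₁ a₂ b₁ b₂ U : Ωs → ℝ) (π₁ τ₁ τ₂ : ℝ)
    (hπ₀ : 0 < π₁) (hπ₁ : π₁ < 1) (hτ₁ : 0 < τ₁) (hτ₂ : 0 < τ₂)
    (hma₁ : Measurable a₁) (hma₂ : Measurable a₂)
    (hmb₁ : Measurable b₁) (hmb₂ : Measurable b₂) (hmU : Measurable U)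
    (hindep : iIndepFun ![a₁, a₂, b₁, b₂, U] μ)
    (hU01 : ∀ ω, U ω = 0 ∨ U ω = 1)
    (hUmean : ∫ ω, U ω ∂μ = π₁)
    (hInt : ∀ f ∈ [a₁, a₂, b₁, b₂], Integrable f μ ∧ Integrable (fun ω => f ω ^ 2) μ)
    (hmean : ∀ f ∈ [a₁, a₂, b₁, b₂], ∫ ω, f ω ∂μ = 0)
    (hvar : ∀ f ∈ [a₁, a₂, b₁, b₂], ∫ ω, f ω ^ 2 ∂μ = 1) :
    let y₁ : Ωs → ℝ := fun ω => τ₁ * a₁ ω * U ω + τ₂ * b₁ ω * (1 - U ω)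
    let y₂ : Ωs → ℝ := fun ω => τ₁ * a₂ ω * U ω + τ₂ * b₂ ω * (1 - U ω)
    (∫ ω, y₁ ω ^ 2 * y₂ ω ^ 2 ∂μ) - (∫ ω, y₁ ω ^ 2 ∂μ) * (∫ ω, y₂ ω ^ 2 ∂μ)
        = π₁ * (1 - π₁) * (τ₁ ^ 2 - τ₂ ^ 2) ^ 2 ∧
      ((∫ ω, y₁ ω ^ 2 * y₂ ω ^ 2 ∂μ) - (∫ ω, y₁ ω ^ 2 ∂μ) * (∫ ω, y₂ ω ^ 2 ∂μ) = 0 ↔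
        τ₁ ^ 2 = τ₂ ^ 2) :=
  stmt15_general μ a₁ a₂ b₁ b₂ U π₁ τ₁ τ₂ hπ₀ hπ₁ hmU hindep hU01 hUmean hInt hvar
end

section
/- Let φ₁ > φ₂ be the eigenvalues of M, and define Φ₁₁² = (φ₁ − τ₁²)(φ₁ − τ₂²)/(φ₁ − φ₂) and Φ₂₁² = (τ₁² − φ₂)(φ₂ − τ₂²)/(φ₁ − φ₂). Then the inequality τ₁⁴·( Φ₁₁²/((φ₁−τ₁²)²φ₁) + Φ₂₁²/((φ₂−τ₁²)²φ₂) ) ≥ τ₂⁴·( Φ₁₁²/((φ₁−τ₂²)²φ₁) + Φ₂₁²/((φ₂−τ₂²)²φ₂) ) holds if and only if Φ₂/τ₂² ≥ Φ₁/τ₁². -/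
set_option maxHeartbeats 1000000 in
/-- Comparison of the two negatively-ridged discriminant directions: with
`φ₁ > φ₂` the eigenvalues of `M = [[Φ₁+τ₁², √(Φ₁Φ₂)], [√(Φ₁Φ₂), Φ₂+τ₂²]]`
(given in closed form), and `Φ₁₁² = (φ₁−τ₁²)(φ₁−τ₂²)/(φ₁−φ₂)`,
`Φ₂₁² = (τ₁²−φ₂)(φ₂−τ₂²)/(φ₁−φ₂)`, the inequality
`τ₁⁴ (Φ₁₁²/((φ₁−τ₁²)²φ₁) + Φ₂₁²/((φ₂−τ₁²)²φ₂)) ≥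
 τ₂⁴ (Φ₁₁²/((φ₁−τ₂²)²φ₁) + Φ₂₁²/((φ₂−τ₂²)²φ₂))`
holds iff `Φ₂/τ₂² ≥ Φ₁/τ₁²`. -/
theorem stmt19 (Φ₁ Φ₂ τ₁sq τ₂sq : ℝ) (hΦ₁ : 0 < Φ₁) (hΦ₂ : 0 < Φ₂)
    (hτ₂ : 0 < τ₂sq) (hτ : τ₂sq < τ₁sq) :
    let φ₁ := (τ₁sq + τ₂sq + Φ₁ + Φ₂) / 2 +
      Real.sqrt (((τ₁sq - τ₂sq + Φ₁ - Φ₂) / 2) ^ 2 + Φ₁ * Φ₂)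
    let φ₂ := (τ₁sq + τ₂sq + Φ₁ + Φ₂) / 2 -
      Real.sqrt (((τ₁sq - τ₂sq + Φ₁ - Φ₂) / 2) ^ 2 + Φ₁ * Φ₂)
    let Φ₁₁sq := (φ₁ - τ₁sq) * (φ₁ - τ₂sq) / (φ₁ - φ₂)
    let Φ₂₁sq := (τ₁sq - φ₂) * (φ₂ - τ₂sq) / (φ₁ - φ₂)
    (τ₂sq ^ 2 * (Φ₁₁sq / ((φ₁ - τ₂sq) ^ 2 * φ₁) + Φ₂₁sq / ((φ₂ - τ₂sq) ^ 2 * φ₂)) ≤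
        τ₁sq ^ 2 * (Φ₁₁sq / ((φ₁ - τ₁sq) ^ 2 * φ₁) + Φ₂₁sq / ((φ₂ - τ₁sq) ^ 2 * φ₂)) ↔
      Φ₁ / τ₁sq ≤ Φ₂ / τ₂sq) := by
  intro φ₁ φ₂ A B
  have hX : (0:ℝ) < ((τ₁sq - τ₂sq + Φ₁ - Φ₂) / 2) ^ 2 + Φ₁ * Φ₂ := by positivity
  have hτ₁ : 0 < τ₁sq := hτ₂.trans hτ
  have hd : 0 < τ₁sq - τ₂sq := by linarith
  have hsnn : 0 ≤ Real.sqrt (((τ₁sq - τ₂sq + Φ₁ - Φ₂) / 2) ^ 2 + Φ₁ * Φ₂) :=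
    Real.sqrt_nonneg _
  have hspos : 0 < Real.sqrt (((τ₁sq - τ₂sq + Φ₁ - Φ₂) / 2) ^ 2 + Φ₁ * Φ₂) :=
    Real.sqrt_pos.2 hX
  have hs2 : Real.sqrt (((τ₁sq - τ₂sq + Φ₁ - Φ₂) / 2) ^ 2 + Φ₁ * Φ₂) ^ 2 =
      ((τ₁sq - τ₂sq + Φ₁ - Φ₂) / 2) ^ 2 + Φ₁ * Φ₂ := Real.sq_sqrt hX.le
  have hφ₁ : φ₁ = (τ₁sq + τ₂sq + Φ₁ + Φ₂) / 2 +
      Real.sqrt (((τ₁sq - τ₂sq + Φ₁ - Φ₂) / 2) ^ 2 + Φ₁ * Φ₂) := rfl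
  have hφ₂ : φ₂ = (τ₁sq + τ₂sq + Φ₁ + Φ₂) / 2 -
      Real.sqrt (((τ₁sq - τ₂sq + Φ₁ - Φ₂) / 2) ^ 2 + Φ₁ * Φ₂) := rfl
  have hA : A = (φ₁ - τ₁sq) * (φ₁ - τ₂sq) / (φ₁ - φ₂) := rfl
  have hB : B = (τ₁sq - φ₂) * (φ₂ - τ₂sq) / (φ₁ - φ₂) := rfl
  clear_value A B φ₁ φ₂
  -- sum and product of eigenvalues
  have hsum : φ₁ + φ₂ = τ₁sq + τ₂sq + Φ₁ + Φ₂ := by rw [hφ₁, hφ₂]; ring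
  have hprod : φ₁ * φ₂ = τ₁sq * τ₂sq + Φ₁ * τ₂sq + Φ₂ * τ₁sq := by
    rw [hφ₁, hφ₂]; linear_combination -hs2
  -- ordering facts
  have hgap : φ₁ - φ₂ = 2 * Real.sqrt (((τ₁sq - τ₂sq + Φ₁ - Φ₂) / 2) ^ 2 + Φ₁ * Φ₂) := by
    rw [hφ₁, hφ₂]; ring
  have hgap_pos : 0 < φ₁ - φ₂ := by rw [hgap]; linarith
  have hφ₂t2 : τ₂sq < φ₂ := by
    have hW : (0:ℝ) < (τ₁sq - τ₂sq + Φ₁ + Φ₂) / 2 := by linarith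
    have hlt : Real.sqrt (((τ₁sq - τ₂sq + Φ₁ - Φ₂) / 2) ^ 2 + Φ₁ * Φ₂) <
        (τ₁sq - τ₂sq + Φ₁ + Φ₂) / 2 := by
      rw [show (τ₁sq - τ₂sq + Φ₁ + Φ₂) / 2 =
          Real.sqrt (((τ₁sq - τ₂sq + Φ₁ + Φ₂) / 2) ^ 2) from
        (Real.sqrt_sq hW.le).symm]
      apply Real.sqrt_lt_sqrt hX.le
      nlinarith
    rw [hφ₂]; linarith
  have hφ₂t1 : φ₂ < τ₁sq := by
    have h2 : ((- τ₁sq + τ₂sq + Φ₁ + Φ₂) / 2) ^ 2 <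
        Real.sqrt (((τ₁sq - τ₂sq + Φ₁ - Φ₂) / 2) ^ 2 + Φ₁ * Φ₂) ^ 2 := by
      rw [hs2]; nlinarith
    have := lt_of_pow_lt_pow_left₀ 2 hsnn h2
    rw [hφ₂]; linarith
  have hφ₁t1 : τ₁sq < φ₁ := by
    have h2 : ((τ₁sq - τ₂sq - Φ₁ - Φ₂) / 2) ^ 2 <
        Real.sqrt (((τ₁sq - τ₂sq + Φ₁ - Φ₂) / 2) ^ 2 + Φ₁ * Φ₂) ^ 2 := by
      rw [hs2]; nlinarith
    have := lt_of_pow_lt_pow_left₀ 2 hsnn h2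
    rw [hφ₁]; linarith
  have hφ₂pos : 0 < φ₂ := hτ₂.trans hφ₂t2
  have hφ₁pos : 0 < φ₁ := by linarith
  -- characteristic-polynomial identities
  have h1 : (φ₁ - τ₁sq) * (τ₁sq - φ₂) = Φ₁ * (τ₁sq - τ₂sq) := by
    linear_combination τ₁sq * hsum - hprod
  have h2 : (φ₁ - τ₂sq) * (φ₂ - τ₂sq) = Φ₂ * (τ₁sq - τ₂sq) := by
    linear_combination hprod - τ₂sq * hsum
  have hΦ1 : Φ₁ = (φ₁ - τ₁sq) * (τ₁sq - φ₂) / (τ₁sq - τ₂sq) := by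
    rw [eq_div_iff hd.ne']; linarith [h1]
  have hΦ2 : Φ₂ = (φ₁ - τ₂sq) * (φ₂ - τ₂sq) / (τ₁sq - τ₂sq) := by
    rw [eq_div_iff hd.ne']; linarith [h2]
  -- key algebraic identity
  have hne1 : φ₁ - τ₁sq ≠ 0 := by linarith
  have hne2 : τ₁sq - φ₂ ≠ 0 := by linarith
  have hne3 : φ₁ - τ₂sq ≠ 0 := by linarith
  have hne4 : φ₂ - τ₂sq ≠ 0 := by linarith
  have hne5 : φ₁ - φ₂ ≠ 0 := ne_of_gt hgap_pos
  have hne6 : φ₁ ≠ 0 := ne_of_gt hφ₁pos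
  have hne7 : φ₂ ≠ 0 := ne_of_gt hφ₂pos
  have hne8 : φ₂ - τ₁sq ≠ 0 := by linarith
  have hkey : τ₁sq ^ 2 * (A / ((φ₁ - τ₁sq) ^ 2 * φ₁) + B / ((φ₂ - τ₁sq) ^ 2 * φ₂)) -
      τ₂sq ^ 2 * (A / ((φ₁ - τ₂sq) ^ 2 * φ₁) + B / ((φ₂ - τ₂sq) ^ 2 * φ₂)) =
      τ₁sq / Φ₁ - τ₂sq / Φ₂ := by
    rw [hA, hB, hΦ1, hΦ2]
    field_simp
    ring
  rw [← sub_nonneg, hkey, sub_nonneg, div_le_div_iff₀ hΦ₂ hΦ₁,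
    div_le_div_iff₀ hτ₁ hτ₂]
  constructor <;> intro h <;> nlinarith [h]
end
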